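/- With the combinatorial setup (base S, set Φ from admissible pairs): S and Φ are disjoint, and every element (i,j) ∈ Φ has strictly above it in its column an element of S; precisely, if (i,j) ∈ Φ then (i,j) ∉ S and there exists ĩ > i with (ĩ, j) ∈ S. -/

import Mathlib

/-- `i` and `j` lie in the same diagonal block of the composition with partial sums `R`. -/
def SameBlock (R : ℕ → ℕ) (s i j : ℕ) : Prop :=
  ∃ k, 1 ≤ k ∧ k ≤ s ∧ R (k-1) < i ∧ i ≤ R k ∧ R (k-1) < j ∧ j ≤ R k

/-- The set `M` of matrix positions strictly above the block diagonal. -/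
def Mset (R : ℕ → ℕ) (s : ℕ) : Set (ℕ × ℕ) :=
  {p | 1 ≤ p.1 ∧ p.1 < p.2 ∧ p.2 ≤ R s ∧ ¬ SameBlock R s p.1 p.2}

/-- The relation `p ≻ q` on `M`. -/
def Succ (R : ℕ → ℕ) (s : ℕ) (p q : ℕ × ℕ) : Prop :=
  (p.1 = q.1 ∧ q.2 < p.2 ∧ SameBlock R s q.2 p.2) ∨
  (p.2 = q.2 ∧ p.1 < q.1 ∧ SameBlock R s p.1 q.1)

/-- `S` is a base of `M`: an antichain under `≻` such that every element of `M \ S`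
dominates some element of `S`. -/
def IsBase (R : ℕ → ℕ) (s : ℕ) (S : Set (ℕ × ℕ)) : Prop :=
  S ⊆ Mset R s ∧
  (∀ p ∈ S, ∀ q ∈ S, p ≠ q → ¬ Succ R s p q ∧ ¬ Succ R s q p) ∧
  (∀ γ ∈ Mset R s \ S, ∃ ξ ∈ S, Succ R s γ ξ)

/-- The set `Φ` of roots `α_q + ξ'` over admissible pairs `q = (ξ, ξ')` of elements of `S`. -/
def PhiSet (R : ℕ → ℕ) (s : ℕ) (S : Set (ℕ × ℕ)) : Set (ℕ × ℕ) :=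
  {φ | ∃ a b c d, (a, b) ∈ S ∧ (c, d) ∈ S ∧ b < c ∧ SameBlock R s b c ∧ φ = (b, d)}

theorem Succ.ne {R : ℕ → ℕ} {s : ℕ} {p q : ℕ × ℕ} (h : Succ R s p q) : p ≠ q := by
  rintro rfl
  rcases h with ⟨-, hlt, -⟩ | ⟨-, hlt, -⟩ <;> exact lt_irrefl _ hlt

theorem IsBase.notMem_of_succ {R : ℕ → ℕ} {s : ℕ} {S : Set (ℕ × ℕ)} (hS : IsBase R s S)
    {p q : ℕ × ℕ} (hq : q ∈ S) (hpq : Succ R s p q) : p ∉ S :=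
  fun hp => (hS.2.1 p hp q hq hpq.ne).1 hpq

theorem phi_disjoint_and_below_general (s : ℕ) (R : ℕ → ℕ)
    (S : Set (ℕ × ℕ)) (hS : IsBase R s S) :
    ∀ i j : ℕ, (i, j) ∈ PhiSet R s S →
      (i, j) ∉ S ∧ ∃ i', i < i' ∧ (i', j) ∈ S := by
  rintro i j ⟨-, b, c, d, -, hcd, hbc, hsb, heq⟩
  obtain ⟨rfl, rfl⟩ := Prod.ext_iff.mp heq
  -- `(b, d) ≻ (c, d)` along column `d`, and `(c, d) ∈ S` is the element above it.
  exact ⟨hS.notMem_of_succ hcd (Or.inr ⟨rfl, hbc, hsb⟩), c, hbc, hcd⟩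

theorem phi_disjoint_and_below (n s : ℕ) (hn : 1 ≤ n) (hs : 1 ≤ s) (R : ℕ → ℕ)
    (hR0 : R 0 = 0) (hmono : ∀ k < s, R k < R (k+1)) (hRs : R s = n)
    (S : Set (ℕ × ℕ)) (hS : IsBase R s S) :
    ∀ i j : ℕ, (i, j) ∈ PhiSet R s S →
      (i, j) ∉ S ∧ ∃ i', i < i' ∧ (i', j) ∈ S :=
  phi_disjoint_and_below_general s R S hS
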